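/- arXiv:1301.0226 — 7 statements merged into one kernel-verified Lean document; each statement's English description precedes it below -/
import Mathlib

section
/- Let n ≥ 2, let a ∈ (0,1), and let p(z) = (z−a)·∏_{k=1}^{n−1}(z−z_k) with |z_k| ≤ 1 for all k, and let ρ₁ denote the minimum of |a − ζ| over the zeros ζ of p′. Then for every k ∈ {1, …, n−1}, 2·ρ₁·sin(π/n) ≤ |a − z_k| ≤ 1 + a. -/
/-!
Rescale so that `a ↦ 0` and `z_k ↦ 1`: the derivative `f` of `P(x) = p(a + (z_k - a) x)`
satisfies `P(1) - P(0) = 0`, which says exactly that `f` is apolar to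
`q = X ^ n - (X - 1) ^ n`. The zeros of `q` are `1 / (1 - ξ)` for the `n`-th roots of unity
`ξ ≠ 1`, so they lie in the disk `|x| ≤ 1 / (2 sin (π / n))`. By Grace's theorem this disk
contains a zero of `f`, i.e. `p'` has a zero within `|a - z_k| / (2 sin (π / n))` of `a`.
Grace's theorem is proved by induction on the degree: splitting off a zero `ζ` of `f` outside
the disk, apolarity passes to the quotient and the polar derivative of `q` with respect to `ζ`,
whose zeros stay in the disk by Laguerre's theorem.
-/

open Polynomial Real Complex
open scoped ComplexConjugate

section CommRing

open Finset Nat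

variable {K : Type*} [CommRing K]

/-- The apolarity pairing of two polynomials of degree `m`, normalised by `k! (m - k)!` in
place of the usual `1 / (m choose k)` (which is `m!` times smaller) so that no division occurs. -/
noncomputable def apolarPairing (m : ℕ) (f q : K[X]) : K :=
  ∑ ij ∈ antidiagonal m, (-1) ^ ij.1 * (ij.1 ! * ij.2 ! : K) * f.coeff ij.1 * q.coeff ij.2

noncomputable def polarDeriv (ζ : K) (q : K[X]) : K[X] :=
  C (q.natDegree : K) * q + (C ζ - X) * derivative q

lemma coeff_polarDeriv (ζ : K) (q : K[X]) (j : ℕ) :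
    (polarDeriv ζ q).coeff j = (q.natDegree - j) * q.coeff j + ζ * (j + 1) * q.coeff (j + 1) := by
  rcases j with _ | j
  · simp [polarDeriv, sub_mul, coeff_derivative, mul_coeff_zero]
  · simp [polarDeriv, sub_mul, coeff_derivative, coeff_X_mul]
    ring

lemma apolarPairing_X_sub_C_mul {m : ℕ} {ζ : K} {g q : K[X]} (hg : g.coeff (m + 1) = 0)
    (hq : q.natDegree = m + 1) :
    apolarPairing (m + 1) ((X - C ζ) * g) q = -apolarPairing m g (polarDeriv ζ q) := by
  simp only [apolarPairing, sub_mul, coeff_sub, coeff_C_mul, mul_sub, sum_sub_distrib]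
  rw [sum_antidiagonal_succ, sum_antidiagonal_succ']
  simp only [coeff_X_mul_zero, coeff_X_mul, hg, coeff_polarDeriv, hq, mul_zero, zero_mul, zero_add,
    ← sum_sub_distrib, ← sum_neg_distrib]
  refine sum_congr rfl fun ij hij => ?_
  obtain ⟨i, j⟩ := ij
  obtain rfl : i + j = m := mem_antidiagonal.mp hij
  push_cast [factorial_succ]
  ring

lemma coeff_X_sub_one_pow (n k : ℕ) :
    ((X - 1 : K[X]) ^ n).coeff k = (-1) ^ (n - k) * n.choose k := by
  rw [show (X - 1 : K[X]) = X + C (-1) by simp [sub_eq_add_neg], coeff_X_add_C_pow]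

lemma natDegree_X_pow_succ_sub_X_sub_one_pow [CharZero K] (m : ℕ) :
    (X ^ (m + 1) - (X - 1) ^ (m + 1) : K[X]).natDegree = m := by
  refine natDegree_eq_of_le_of_coeff_ne_zero (natDegree_le_iff_coeff_eq_zero.mpr fun N hN => ?_) ?_
  · rw [coeff_sub, coeff_X_pow, coeff_X_sub_one_pow]
    rcases (Nat.succ_le_of_lt hN).eq_or_lt with rfl | hN'
    · simp
    · simp [Nat.choose_eq_zero_of_lt hN', hN'.ne']
  · rw [coeff_sub, coeff_X_pow, coeff_X_sub_one_pow, if_neg (by omega), Nat.add_sub_cancel_left,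
      Nat.choose_succ_self_right]
    simpa using Nat.cast_add_one_ne_zero (R := K) m

lemma apolarPairing_derivative_X_pow_sub_X_sub_one_pow (m : ℕ) {P : K[X]}
    (hP : P.natDegree ≤ m + 1) :
    apolarPairing m (derivative P) (X ^ (m + 1) - (X - 1) ^ (m + 1)) =
      (m + 1)! * (P.eval 1 - P.eval 0) := by
  have hcoeff : ∀ i j, i + j = m →
      (X ^ (m + 1) - (X - 1) ^ (m + 1) : K[X]).coeff j = (-1) ^ i * ((i + 1 + j).choose j : K) := by
    rintro i j rfl
    rw [coeff_sub, coeff_X_pow, coeff_X_sub_one_pow, if_neg (by omega),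
      show i + j + 1 - j = i + 1 by omega, show i + 1 + j = i + j + 1 by omega]
    ring
  have hsum : ∑ i ∈ range (m + 1), P.coeff (i + 1) = P.eval 1 - P.eval 0 := by
    rw [eval_eq_sum_range' (Nat.lt_succ_of_le hP) 1, sum_range_succ' _ (m + 1),
      ← coeff_zero_eq_eval_zero]
    simp
  rw [apolarPairing, ← hsum, mul_sum, sum_antidiagonal_eq_sum_range_succ_mk]
  refine sum_congr rfl fun i hi => ?_
  have hi : i ≤ m := Nat.lt_succ_iff.mp (mem_range.mp hi)
  rw [hcoeff i (m - i) (by omega), coeff_derivative]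
  have hfact := add_choose_mul_factorial_mul_factorial (i + 1) (m - i)
  rw [show i + 1 + (m - i) = m + 1 by omega] at hfact ⊢
  rw [← hfact]
  push_cast [factorial_succ]
  ring_nf
  simp only [pow_mul', neg_one_sq, one_pow, mul_one]

end CommRing

lemma norm_multiset_sum_le_card_mul {E : Type*} [SeminormedAddCommGroup E] {s : Multiset E}
    {R : ℝ} (h : ∀ x ∈ s, ‖x‖ ≤ R) : ‖s.sum‖ ≤ Multiset.card s * R := by
  calc ‖s.sum‖ ≤ (s.map norm).sum := norm_multiset_sum_le s
    _ ≤ Multiset.card (s.map norm) • R :=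
      Multiset.sum_le_card_nsmul _ _ (by simpa using h)
    _ = Multiset.card s * R := by simp

lemma norm_sq_conj_mul_sub_sub (z u : ℂ) (s : ℝ) :
    ‖conj z * u - s‖ ^ 2 - s * ‖z - u‖ ^ 2 = (‖z‖ ^ 2 - s) * (‖u‖ ^ 2 - s) := by
  simp only [Complex.sq_norm, Complex.normSq_apply, Complex.sub_re, Complex.sub_im,
    Complex.mul_re, Complex.mul_im, Complex.conj_re, Complex.conj_im, Complex.ofReal_re,
    Complex.ofReal_im]
  ring

lemma norm_mul_inv_sub_conj_le_iff {R : ℝ} {z u : ℂ} (hR : 0 ≤ R) (hz : R < ‖z‖) (hu : u ≠ z) :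
    ‖((‖z‖ ^ 2 - R ^ 2 : ℝ) : ℂ) * (z - u)⁻¹ - conj z‖ ≤ R ↔ ‖u‖ ≤ R := by
  have hzu : z - u ≠ 0 := sub_ne_zero.mpr hu.symm
  have hmobius : ((‖z‖ ^ 2 - R ^ 2 : ℝ) : ℂ) * (z - u)⁻¹ - conj z =
      (conj z * u - (R ^ 2 : ℝ)) / (z - u) := by
    rw [eq_div_iff hzu]
    push_cast
    rw [← Complex.mul_conj']
    field_simp
    ring
  rw [hmobius, norm_div, div_le_iff₀ (norm_pos_iff.mpr hzu), ← sq_le_sq₀ (norm_nonneg _)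
    (by positivity), ← sq_le_sq₀ (norm_nonneg _) hR, ← sub_nonpos, mul_pow,
    norm_sq_conj_mul_sub_sub]
  have hD : 0 < ‖z‖ ^ 2 - R ^ 2 := by nlinarith
  rw [← neg_nonneg, ← mul_neg, mul_nonneg_iff_of_pos_left hD, neg_nonneg, sub_nonpos]

/-- Laguerre's theorem. -/
theorem norm_le_of_isRoot_polarDeriv {R : ℝ} (hR : 0 ≤ R) {q : ℂ[X]} (hq : q.natDegree ≠ 0)
    (hroots : ∀ z, q.IsRoot z → ‖z‖ ≤ R) {ζ : ℂ} (hζ : R < ‖ζ‖) {z : ℂ}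
    (hz : (polarDeriv ζ q).IsRoot z) : ‖z‖ ≤ R := by
  by_contra! hzR
  have hqz : q.eval z ≠ 0 := fun h => hzR.not_ge (hroots z h)
  have hroots_ne : ∀ r ∈ q.roots, r ≠ z := fun r hr hrz =>
    hzR.not_ge (hrz ▸ hroots r (isRoot_of_mem_roots hr))
  have hS : (q.natDegree : ℂ) + (ζ - z) * (q.roots.map fun r => (z - r)⁻¹).sum = 0 := by
    have h := (IsAlgClosed.splits q).eval_derivative_eq_eval_mul_sum hqz
    simp only [IsRoot, polarDeriv, eval_add, eval_mul, eval_sub, eval_C, eval_X, h, one_div] at hz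
    exact (mul_eq_zero.mp (by linear_combination hz)).resolve_left hqz
  have hzζ : ζ ≠ z := by
    rintro rfl
    simp [hq] at hS
  have hS' : (q.roots.map fun r => (z - r)⁻¹).sum = q.natDegree * (z - ζ)⁻¹ := by
    rw [eq_mul_inv_iff_mul_eq₀ (sub_ne_zero.mpr hzζ.symm)]
    linear_combination -hS
  -- `u ↦ D / (z - u) - conj z` maps the disk `‖u‖ ≤ R` onto itself, and by `hS'` the image of
  -- `ζ` is the mean of the images of the roots of `q`, so it lies in the disk as well.
  set D : ℂ := ((‖z‖ ^ 2 - R ^ 2 : ℝ) : ℂ)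
  have hsum : (q.roots.map fun r => D * (z - r)⁻¹ - conj z).sum =
      q.natDegree * (D * (z - ζ)⁻¹ - conj z) := by
    rw [Multiset.sum_map_sub, Multiset.sum_map_mul_left, Multiset.map_const',
      Multiset.sum_replicate, IsAlgClosed.card_roots_eq_natDegree, hS', nsmul_eq_mul]
    ring
  have hbound := norm_multiset_sum_le_card_mul (s := q.roots.map fun r => D * (z - r)⁻¹ - conj z)
    (R := R) (by
      simp only [Multiset.mem_map]
      rintro _ ⟨r, hr, rfl⟩
      exact (norm_mul_inv_sub_conj_le_iff hR hzR (hroots_ne r hr)).mpr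
        (hroots r (isRoot_of_mem_roots hr)))
  rw [hsum, Multiset.card_map, IsAlgClosed.card_roots_eq_natDegree, norm_mul,
    Complex.norm_natCast] at hbound
  have := (norm_mul_inv_sub_conj_le_iff hR hzR hzζ).mp
    (le_of_mul_le_mul_left hbound (by positivity))
  exact hζ.not_ge this

theorem natDegree_polarDeriv {R : ℝ} {q : ℂ[X]} {m : ℕ} (hq : q.natDegree = m + 1)
    (hroots : ∀ z, q.IsRoot z → ‖z‖ ≤ R) {ζ : ℂ} (hζ : R < ‖ζ‖) :
    (polarDeriv ζ q).natDegree = m := by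
  have hle : (polarDeriv ζ q).natDegree ≤ m := by
    refine natDegree_le_iff_coeff_eq_zero.mpr fun N hN => ?_
    rw [coeff_polarDeriv, coeff_eq_zero_of_natDegree_lt (by omega : q.natDegree < N + 1)]
    rcases (Nat.succ_le_of_lt hN).eq_or_lt with rfl | hN'
    · simp [hq]
    · simp [coeff_eq_zero_of_natDegree_lt (by omega : q.natDegree < N)]
  have hsum : ‖q.roots.sum‖ ≤ (m + 1) * R := by
    have := norm_multiset_sum_le_card_mul fun r hr => hroots r (isRoot_of_mem_roots hr)
    simpa [IsAlgClosed.card_roots_eq_natDegree, hq] using this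
  have hcoeff : (polarDeriv ζ q).coeff m = q.leadingCoeff * ((m + 1) * ζ - q.roots.sum) := by
    have h := (IsAlgClosed.splits q).nextCoeff_eq_neg_sum_roots_mul_leadingCoeff
    rw [nextCoeff, hq, if_neg (by omega), Nat.add_sub_cancel] at h
    rw [coeff_polarDeriv, h, leadingCoeff, hq]
    push_cast
    ring
  refine natDegree_eq_of_le_of_coeff_ne_zero hle ?_
  rw [hcoeff]
  refine mul_ne_zero (leadingCoeff_ne_zero.mpr ?_) (sub_ne_zero.mpr fun h => ?_)
  · rintro rfl
    simp at hq
  · have : ‖(m + 1 : ℂ) * ζ‖ = (m + 1) * ‖ζ‖ := by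
      rw [norm_mul]; norm_cast
    rw [← h, this] at hsum
    exact hζ.not_ge (le_of_mul_le_mul_left hsum (by positivity))

/-- Grace's theorem, for a disk centred at the origin. -/
theorem exists_isRoot_norm_le_of_apolarPairing_eq_zero {R : ℝ} (hR : 0 ≤ R) {f q : ℂ[X]}
    (hf : f ≠ 0) (hfq : f.natDegree = q.natDegree) (hroots : ∀ z, q.IsRoot z → ‖z‖ ≤ R)
    (hapolar : apolarPairing q.natDegree f q = 0) : ∃ z, f.IsRoot z ∧ ‖z‖ ≤ R := by
  induction hm : q.natDegree generalizing f q with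
  | zero =>
    have hq : q ≠ 0 := by
      rintro rfl
      have := hroots (R + 1 : ℝ) (by simp)
      rw [Complex.norm_real, Real.norm_of_nonneg (by linarith)] at this
      linarith
    rw [hm] at hfq hapolar
    have hf0 := leadingCoeff_ne_zero.mpr hf
    have hq0 := leadingCoeff_ne_zero.mpr hq
    rw [leadingCoeff, hfq] at hf0
    rw [leadingCoeff, hm] at hq0
    simp [apolarPairing, hf0, hq0] at hapolar
  | succ m ih =>
    obtain ⟨ζ, hζ⟩ := IsAlgClosed.exists_root f (by
      rw [degree_eq_natDegree hf, hfq, hm]; exact_mod_cast m.succ_ne_zero)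
    rcases le_or_gt ‖ζ‖ R with hζR | hζR
    · exact ⟨ζ, hζ, hζR⟩
    have hfg : (X - C ζ) * (f /ₘ (X - C ζ)) = f := mul_divByMonic_eq_iff_isRoot.mpr hζ
    have hg : (f /ₘ (X - C ζ)).natDegree = m := by
      rw [natDegree_divByMonic f (monic_X_sub_C ζ), hfq, hm, natDegree_X_sub_C, Nat.add_sub_cancel]
    have hg0 : f /ₘ (X - C ζ) ≠ 0 := by
      rintro h
      rw [h, mul_zero] at hfg
      exact hf hfg.symm
    have hq1 := natDegree_polarDeriv hm hroots hζR
    obtain ⟨z, hz, hzR⟩ := ih hg0 (hg.trans hq1.symm)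
      (fun z hz => norm_le_of_isRoot_polarDeriv hR (by omega) hroots hζR hz) (by
        rw [hq1, ← neg_eq_zero, ← apolarPairing_X_sub_C_mul _ hm, hfg, ← hm, hapolar]
        exact coeff_eq_zero_of_natDegree_lt (by omega)) hq1
    exact ⟨z, by rw [← hfg, IsRoot, eval_mul, hz, mul_zero], hzR⟩

lemma sin_pi_div_le_sin_pi_mul_div {n i : ℕ} (hi : i ≠ 0) (hin : i < n) :
    Real.sin (π / n) ≤ Real.sin (π * i / n) := by
  have hn : (0 : ℝ) < n := by exact_mod_cast Nat.zero_lt_of_lt hin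
  have hi1 : (1 : ℝ) ≤ i := by exact_mod_cast Nat.one_le_iff_ne_zero.mpr hi
  have hin' : (i : ℝ) + 1 ≤ n := by exact_mod_cast hin
  set t := π / n with ht
  have ht0 : 0 < t := by positivity
  have hπ : π = n * t := by rw [ht]; field_simp
  have hmin := strictConcaveOn_sin_Icc.concaveOn.min_le_of_mem_Icc (x := t) (y := π - t)
    (z := π * i / n) ⟨ht0.le, by nlinarith⟩ ⟨by nlinarith, by linarith⟩
    ⟨by rw [mul_div_right_comm]; nlinarith, by rw [mul_div_right_comm]; nlinarith⟩
  rwa [Real.sin_pi_sub, min_self] at hmin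

lemma two_mul_sin_pi_div_le_norm_one_sub {n : ℕ} {ξ : ℂ} (hξ : ξ ^ n = 1) (hξ1 : ξ ≠ 1) :
    2 * Real.sin (π / n) ≤ ‖1 - ξ‖ := by
  rcases eq_or_ne n 0 with rfl | hn
  · simp
  have : NeZero n := ⟨hn⟩
  obtain ⟨i, hin, rfl⟩ := (Complex.isPrimitiveRoot_exp n hn).eq_pow_of_pow_eq_one hξ
  have hi : i ≠ 0 := by rintro rfl; simp at hξ1
  have hexp : Complex.exp (2 * π * I / n) ^ i = Complex.exp (I * ((2 * π * i / n : ℝ) : ℂ)) := by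
    rw [← Complex.exp_nat_mul]; push_cast; ring_nf
  rw [norm_sub_rev, hexp, Complex.norm_exp_I_mul_ofReal_sub_one, Real.norm_eq_abs]
  calc 2 * Real.sin (π / n) ≤ 2 * Real.sin (π * i / n) := by
        gcongr; exact sin_pi_div_le_sin_pi_mul_div hi hin
    _ ≤ |2 * Real.sin (2 * π * i / n / 2)| := by
        rw [show 2 * π * i / n / 2 = π * i / n by ring]; exact le_abs_self _

lemma two_mul_sin_pi_div_mul_norm_le_one {n : ℕ} {z : ℂ}
    (hz : (X ^ n - (X - 1) ^ n : ℂ[X]).IsRoot z) : 2 * Real.sin (π / n) * ‖z‖ ≤ 1 := by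
  rcases eq_or_ne z 0 with rfl | hz0
  · simp
  have hξ : (1 - z⁻¹) ^ n = 1 := by
    simp only [IsRoot, eval_sub, eval_pow, eval_X, eval_one, sub_eq_zero] at hz
    rw [show 1 - z⁻¹ = (z - 1) / z by field_simp, div_pow, ← hz, div_self (pow_ne_zero n hz0)]
  have hξ1 : 1 - z⁻¹ ≠ 1 := by simpa using hz0
  have h := two_mul_sin_pi_div_le_norm_one_sub hξ hξ1
  rwa [sub_sub_cancel, norm_inv, inv_eq_one_div, le_div_iff₀ (norm_pos_iff.mpr hz0)] at h

theorem exists_isRoot_derivative_two_mul_sin_mul_norm_le_one {P : ℂ[X]} (hP : 2 ≤ P.natDegree)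
    (h01 : P.eval 0 = P.eval 1) :
    ∃ x, P.derivative.IsRoot x ∧ 2 * Real.sin (π / P.natDegree) * ‖x‖ ≤ 1 := by
  obtain ⟨m, hm⟩ : ∃ m, P.natDegree = m + 1 := ⟨P.natDegree - 1, by omega⟩
  have hP' : (derivative P).natDegree = m := by
    rw [natDegree_derivative, hm, Nat.add_sub_cancel]
  have hsin : 0 < 2 * Real.sin (π / (m + 1 : ℕ)) := by
    refine mul_pos two_pos (sin_pos_of_pos_of_lt_pi (by positivity) (div_lt_self pi_pos ?_))
    norm_cast
    omega
  have hq := natDegree_X_pow_succ_sub_X_sub_one_pow (K := ℂ) m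
  obtain ⟨x, hx, hxR⟩ := exists_isRoot_norm_le_of_apolarPairing_eq_zero
    (R := (2 * Real.sin (π / (m + 1 : ℕ)))⁻¹) (inv_pos.mpr hsin).le
    (ne_zero_of_natDegree_gt (n := 0) (by omega)) (hP'.trans hq.symm)
    (fun z hz => by
      rw [← one_div, le_div_iff₀' hsin]
      exact two_mul_sin_pi_div_mul_norm_le_one hz)
    (by rw [hq, apolarPairing_derivative_X_pow_sub_X_sub_one_pow m hm.le, h01, sub_self, mul_zero])
  refine ⟨x, hx, ?_⟩
  rwa [hm, ← le_div_iff₀' hsin, one_div]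

theorem exists_isRoot_derivative_two_mul_sin_mul_norm_sub_le {p : ℂ[X]} (hp : 2 ≤ p.natDegree)
    {a b : ℂ} (hab : (X - C a) * (X - C b) ∣ p) :
    ∃ ζ, p.derivative.IsRoot ζ ∧ 2 * Real.sin (π / p.natDegree) * ‖ζ - a‖ ≤ ‖b - a‖ := by
  rcases eq_or_ne b a with rfl | hba
  · refine ⟨b, ?_, by simp⟩
    obtain ⟨g, rfl⟩ := hab
    simp [derivative_mul]
  have hpa : p.IsRoot a := dvd_iff_isRoot.mp ((dvd_mul_right _ _).trans hab)
  have hpb : p.IsRoot b := dvd_iff_isRoot.mp ((dvd_mul_left _ _).trans hab)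
  set P := p.comp (C (b - a) * X + C a)
  have hP : P.natDegree = p.natDegree := by
    rw [natDegree_comp, natDegree_linear (sub_ne_zero.mpr hba), mul_one]
  obtain ⟨x, hx, hxR⟩ := exists_isRoot_derivative_two_mul_sin_mul_norm_le_one (hP ▸ hp)
    (by simp [P, eval_comp, hpa.eq_zero, hpb.eq_zero])
  refine ⟨(b - a) * x + a, ?_, ?_⟩
  · simpa [P, derivative_comp, eval_comp, sub_ne_zero.mpr hba] using hx
  · rw [hP] at hxR
    rw [add_sub_cancel_right, norm_mul]
    calc 2 * Real.sin (π / p.natDegree) * (‖b - a‖ * ‖x‖)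
        = ‖b - a‖ * (2 * Real.sin (π / p.natDegree) * ‖x‖) := by ring
      _ ≤ ‖b - a‖ := mul_le_of_le_one_right (norm_nonneg _) hxR

theorem stmt_2_general (n : ℕ) (hn : 2 ≤ n) (a : ℝ) (ha0 : 0 < a)
    (z : ℕ → ℂ) (hz : ∀ k ∈ Finset.range (n - 1), ‖z k‖ ≤ 1)
    (p : Polynomial ℂ)
    (hp : p = (X - C (a : ℂ)) * ∏ k ∈ Finset.range (n - 1), (X - C (z k)))
    (ρ₁ : ℝ)
    (hρmin : ∀ ζ : ℂ, p.derivative.eval ζ = 0 → ρ₁ ≤ ‖(a : ℂ) - ζ‖) :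
    ∀ k ∈ Finset.range (n - 1),
      2 * ρ₁ * Real.sin (Real.pi / n) ≤ ‖(a : ℂ) - z k‖ ∧
      ‖(a : ℂ) - z k‖ ≤ 1 + a := by
  intro k hk
  have hdeg : p.natDegree = n := by
    rw [hp, natDegree_mul (X_sub_C_ne_zero _)
      (Finset.prod_ne_zero_iff.mpr fun i _ => X_sub_C_ne_zero _), natDegree_X_sub_C,
      natDegree_prod _ _ fun i _ => X_sub_C_ne_zero _]
    simp only [natDegree_X_sub_C, Finset.sum_const, Finset.card_range, smul_eq_mul, mul_one]
    omega
  have hdvd : (X - C (a : ℂ)) * (X - C (z k)) ∣ p :=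
    hp ▸ mul_dvd_mul_left _ (Finset.dvd_prod_of_mem _ hk)
  obtain ⟨ζ, hζ, hζa⟩ := exists_isRoot_derivative_two_mul_sin_mul_norm_sub_le (hdeg ▸ hn) hdvd
  rw [hdeg] at hζa
  have hsin : 0 ≤ Real.sin (π / n) :=
    sin_nonneg_of_nonneg_of_le_pi (by positivity) (div_le_self pi_pos.le (by norm_cast; omega))
  constructor
  · calc 2 * ρ₁ * Real.sin (π / n) = 2 * Real.sin (π / n) * ρ₁ := by ring
      _ ≤ 2 * Real.sin (π / n) * ‖ζ - a‖ := by
        gcongr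
        rw [norm_sub_rev]
        exact hρmin ζ hζ
      _ ≤ ‖z k - a‖ := hζa
      _ = ‖a - z k‖ := norm_sub_rev _ _
  · calc ‖(a : ℂ) - z k‖ ≤ ‖(a : ℂ)‖ + ‖z k‖ := norm_sub_le _ _
      _ ≤ a + 1 := by
        rw [Complex.norm_real, Real.norm_of_nonneg ha0.le]
        linarith [hz k hk]
      _ = 1 + a := add_comm _ _

theorem stmt_2 (n : ℕ) (hn : 2 ≤ n) (a : ℝ) (ha0 : 0 < a) (ha1 : a < 1)
    (z : ℕ → ℂ) (hz : ∀ k ∈ Finset.range (n - 1), ‖z k‖ ≤ 1)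
    (p : Polynomial ℂ)
    (hp : p = (X - C (a : ℂ)) * ∏ k ∈ Finset.range (n - 1), (X - C (z k)))
    (ρ₁ : ℝ)
    (hρmin : ∀ ζ : ℂ, p.derivative.eval ζ = 0 → ρ₁ ≤ ‖(a : ℂ) - ζ‖)
    (hρmem : ∃ ζ : ℂ, p.derivative.eval ζ = 0 ∧ ‖(a : ℂ) - ζ‖ = ρ₁) :
    ∀ k ∈ Finset.range (n - 1),
      2 * ρ₁ * Real.sin (Real.pi / n) ≤ ‖(a : ℂ) - z k‖ ∧
      ‖(a : ℂ) - z k‖ ≤ 1 + a :=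
  stmt_2_general n hn a ha0 z hz p hp ρ₁ hρmin
end

section
/- Let a, r be real numbers with 0 < r < a < 1, and define G(x) = x + √((4 − a² + 2arx − r²)/(a² − 2arx + r²))·√(1 − x²) for x ∈ [r/a, 1]. Then G(x) ≤ (r + 2)/a for all x ∈ [r/a, 1]. -/
theorem stmt_7 (a r : ℝ) (hr : 0 < r) (hra : r < a) (ha : a < 1)
    (G : ℝ → ℝ)
    (hG : ∀ x, G x = x + Real.sqrt ((4 - a ^ 2 + 2 * a * r * x - r ^ 2) /
        (a ^ 2 - 2 * a * r * x + r ^ 2)) * Real.sqrt (1 - x ^ 2)) :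
    ∀ x ∈ Set.Icc (r / a) 1, G x ≤ (r + 2) / a := by
  intro x hx
  obtain ⟨hx1, hx2⟩ := hx
  have ha0 : 0 < a := hr.trans hra
  have hx0 : 0 ≤ x := le_trans (div_nonneg hr.le ha0.le) hx1
  have har : 0 < a * r := mul_pos ha0 hr
  have hD : 0 < a ^ 2 - 2 * a * r * x + r ^ 2 := by nlinarith [sq_nonneg (a - r)]
  have hN : 0 ≤ 4 - a ^ 2 + 2 * a * r * x - r ^ 2 := by nlinarith
  have h1mx : 0 ≤ 1 - x ^ 2 := by nlinarith
  have hc : 0 ≤ (r + 2) / a - x := by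
    rw [sub_nonneg, le_div_iff₀ ha0]
    nlinarith
  rw [hG]
  have hcle : x ≤ (r + 2) / a := by linarith
  have key : (4 - a ^ 2 + 2 * a * r * x - r ^ 2) / (a ^ 2 - 2 * a * r * x + r ^ 2)
      * (1 - x ^ 2) ≤ ((r + 2) / a - x) ^ 2 := by
    rw [div_mul_eq_mul_div, div_le_iff₀ hD]
    have h2 : ((r + 2) / a - x) ^ 2 = ((r + 2) - a * x) ^ 2 / a ^ 2 := by
      field_simp
    rw [h2, div_mul_eq_mul_div, le_div_iff₀ (by positivity : (0:ℝ) < a ^ 2)]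
    nlinarith [sq_nonneg (r ^ 2 + 2 * r + a ^ 2 - 2 * a * (1 + r) * x)]
  have hsq : Real.sqrt ((4 - a ^ 2 + 2 * a * r * x - r ^ 2) /
      (a ^ 2 - 2 * a * r * x + r ^ 2)) * Real.sqrt (1 - x ^ 2) ≤ (r + 2) / a - x := by
    rw [← Real.sqrt_mul (div_nonneg hN hD.le)]
    calc Real.sqrt _ ≤ Real.sqrt (((r + 2) / a - x) ^ 2) := Real.sqrt_le_sqrt key
      _ = (r + 2) / a - x := Real.sqrt_sq hc
  linarith
end

section
/- Let a, r be real numbers with 0 < r < a < 1, and define F(x) = x − √((4 − a² − 2arx − r²)/(a² + 2arx + r²))·√(1 − x²) for x ∈ [−1, −r/a]. Then F(x) ≥ −(r + 2)/a for all x ∈ [−1, −r/a]. -/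
theorem stmt_8 (a r : ℝ) (hr : 0 < r) (hra : r < a) (ha : a < 1)
    (F : ℝ → ℝ)
    (hF : ∀ x, F x = x - Real.sqrt ((4 - a ^ 2 - 2 * a * r * x - r ^ 2) /
        (a ^ 2 + 2 * a * r * x + r ^ 2)) * Real.sqrt (1 - x ^ 2)) :
    ∀ x ∈ Set.Icc (-1 : ℝ) (-(r / a)), -((r + 2) / a) ≤ F x := by
  intro x hx
  obtain ⟨hx1, hx2⟩ := hx
  have ha0 : 0 < a := hr.trans hra
  have hxa : a * x ≤ -r := by
    have h : r / a ≤ -x := by linarith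
    rw [div_le_iff₀ ha0] at h
    linarith
  have hx0 : x ≤ 0 := by nlinarith
  have hQ : 0 < a ^ 2 + 2 * a * r * x + r ^ 2 := by
    nlinarith [mul_nonneg (mul_pos ha0 hr).le (by linarith : (0:ℝ) ≤ x + 1)]
  have hN : 0 ≤ 4 - a ^ 2 - 2 * a * r * x - r ^ 2 := by nlinarith
  have hs : 0 ≤ 1 - x ^ 2 := by nlinarith
  have hpos : 0 ≤ x + (r + 2) / a := by
    have : (1 : ℝ) ≤ (r + 2) / a := by
      rw [le_div_iff₀ ha0]; nlinarith
    linarith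
  have hxe : x + (r + 2) / a = (a * x + (r + 2)) / a := by field_simp
  have key : (4 - a ^ 2 - 2 * a * r * x - r ^ 2) / (a ^ 2 + 2 * a * r * x + r ^ 2)
      * (1 - x ^ 2) ≤ (x + (r + 2) / a) ^ 2 := by
    rw [hxe, div_pow, div_mul_eq_mul_div, div_le_div_iff₀ hQ (pow_pos ha0 2)]
    nlinarith [sq_nonneg ((a * x + r) * (a * x + r + 2) + a ^ 2 * (1 - x ^ 2))]
  have hsqrt : Real.sqrt ((4 - a ^ 2 - 2 * a * r * x - r ^ 2) /
      (a ^ 2 + 2 * a * r * x + r ^ 2)) * Real.sqrt (1 - x ^ 2) ≤ x + (r + 2) / a := by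
    rw [← Real.sqrt_mul (div_nonneg hN hQ.le)]
    calc Real.sqrt ((4 - a ^ 2 - 2 * a * r * x - r ^ 2) /
        (a ^ 2 + 2 * a * r * x + r ^ 2) * (1 - x ^ 2))
        ≤ Real.sqrt ((x + (r + 2) / a) ^ 2) := Real.sqrt_le_sqrt key
      _ = x + (r + 2) / a := Real.sqrt_sq hpos
  rw [hF x]
  linarith
end

section
/- Let a, r be real numbers with 0 < r < a < 1, and set e = a² − 1, d = 1 − r², and φ₀ = (a² − r²)/(1 + r). Then (a − r)² ≤ φ₀ ≤ a² − r², φ₀ satisfies d·φ₀² − 2(e + d)·φ₀ + (e + d)² = 0, and φ₀ is the unique root of the quartic equation e·d·φ⁴ − 2(e + d)²·φ³ + (4 + e − d)·(e + d)²·φ² − (e + d)⁴ = 0 in the interval [(a − r)², a² − r²]. -/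
set_option maxHeartbeats 1000000 in
theorem stmt_11 (a r : ℝ) (hr : 0 < r) (hra : r < a) (ha : a < 1)
    (e d φ₀ : ℝ) (he : e = a ^ 2 - 1) (hd : d = 1 - r ^ 2)
    (hφ₀ : φ₀ = (a ^ 2 - r ^ 2) / (1 + r)) :
    ((a - r) ^ 2 ≤ φ₀ ∧ φ₀ ≤ a ^ 2 - r ^ 2) ∧
    (d * φ₀ ^ 2 - 2 * (e + d) * φ₀ + (e + d) ^ 2 = 0) ∧
    (∀ φ ∈ Set.Icc ((a - r) ^ 2) (a ^ 2 - r ^ 2),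
      (e * d * φ ^ 4 - 2 * (e + d) ^ 2 * φ ^ 3 +
          (4 + e - d) * (e + d) ^ 2 * φ ^ 2 - (e + d) ^ 4 = 0) ↔ φ = φ₀) := by
  have hr1 : (0:ℝ) < 1 + r := by linarith
  have hS : 0 < a ^ 2 - r ^ 2 := by nlinarith
  have hlow : (a - r) ^ 2 ≤ φ₀ := by
    rw [hφ₀, le_div_iff₀ hr1]
    nlinarith [mul_nonneg (mul_nonneg hr.le (sub_pos.mpr hra).le) (by linarith : (0:ℝ) ≤ 2 + r - a)]
  have hhigh : φ₀ ≤ a ^ 2 - r ^ 2 := by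
    rw [hφ₀, div_le_iff₀ hr1]; nlinarith
  have hed : e + d = a ^ 2 - r ^ 2 := by rw [he, hd]; ring
  have hquad : d * φ₀ ^ 2 - 2 * (e + d) * φ₀ + (e + d) ^ 2 = 0 := by
    rw [hφ₀, hed, hd]; field_simp; ring
  refine ⟨⟨hlow, hhigh⟩, hquad, ?_⟩
  intro φ hφ
  obtain ⟨hφl, hφu⟩ := hφ
  have he0 : e < 0 := by rw [he]; nlinarith
  have hd0 : 0 < d := by rw [hd]; nlinarith
  have hd1 : d < 1 := by rw [hd]; nlinarith
  have hS0 : 0 < e + d := by rw [hed]; exact hS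
  have hφpos : 0 < φ := lt_of_lt_of_le (by nlinarith) hφl
  constructor
  · intro hq
    have hfact : (d * φ ^ 2 - 2 * (e + d) * φ + (e + d) ^ 2) *
        (e * φ ^ 2 - 2 * (e + d) * φ - (e + d) ^ 2) = 0 := by
      linear_combination hq
    have hneg : e * φ ^ 2 - 2 * (e + d) * φ - (e + d) ^ 2 < 0 := by nlinarith
    have h1 : d * φ ^ 2 - 2 * (e + d) * φ + (e + d) ^ 2 = 0 := by
      rcases mul_eq_zero.mp hfact with h | h
      · exact h
      · exact absurd h (ne_of_lt hneg)
    have hsplit : (φ - φ₀) * (d * (φ + φ₀) - 2 * (e + d)) = 0 := by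
      linear_combination h1 - hquad
    rcases mul_eq_zero.mp hsplit with h | h
    · linarith [sub_eq_zero.mp h]
    · exfalso
      have hφ₀pos : 0 < φ₀ := lt_of_lt_of_le (by nlinarith) hlow
      have hφu' : φ ≤ e + d := by rw [hed]; exact hφu
      have hφ₀u : φ₀ ≤ e + d := by rw [hed]; exact hhigh
      have h2 : d * (φ + φ₀) ≤ d * (2 * (e + d)) :=
        mul_le_mul_of_nonneg_left (by linarith) hd0.le
      have h3 : d * (2 * (e + d)) < 2 * (e + d) := by
        nlinarith [mul_pos (sub_pos.mpr hd1) hS0]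
      linarith
  · rintro rfl
    linear_combination (e * φ ^ 2 - 2 * (e + d) * φ - (e + d) ^ 2) * hquad
end

section
/- Let a, r be real numbers with 0 < r < a < 1, define G(x) = x + √((4 − a² + 2arx − r²)/(a² − 2arx + r²))·√(1 − x²), and set x₀ = (2r + a² + r²)/(2a(1 + r)). Then G(x₀) = (r + 2)/a. -/
/-! With `D = a² - r²` and `N = (r + 2)² - a²`, substituting `x₀` turns the two radicands into
`N / D` and `1 - x₀² = D N / (2a(1 + r))²`, so the product of the square roots is the perfect
square root `N / (2a(1 + r))`, and `x₀ + N / (2a(1 + r)) = (r + 2) / a`. -/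

theorem Real.sqrt_div_mul_sqrt_mul_div_sq {N D c : ℝ} (hN : 0 ≤ N) (hD : 0 < D) (hc : 0 < c) :
    √(N / D) * √(D * N / c ^ 2) = N / c := by
  rw [← Real.sqrt_mul (div_nonneg hN hD.le)]
  rw [show N / D * (D * N / c ^ 2) = (N / c) ^ 2 by field_simp]
  exact Real.sqrt_sq (div_nonneg hN hc.le)

namespace GAtX₀

variable {a r : ℝ}

theorem sq_sub_two_mul_add_sq (ha : a ≠ 0) (hr : 1 + r ≠ 0) :
    a ^ 2 - 2 * a * r * ((2 * r + a ^ 2 + r ^ 2) / (2 * a * (1 + r))) + r ^ 2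
      = (a ^ 2 - r ^ 2) / (1 + r) := by
  field_simp
  ring

theorem four_sub_sq_add_two_mul_sub_sq (ha : a ≠ 0) (hr : 1 + r ≠ 0) :
    4 - a ^ 2 + 2 * a * r * ((2 * r + a ^ 2 + r ^ 2) / (2 * a * (1 + r))) - r ^ 2
      = ((r + 2) ^ 2 - a ^ 2) / (1 + r) := by
  field_simp
  ring

theorem one_sub_sq (ha : a ≠ 0) (hr : 1 + r ≠ 0) :
    1 - ((2 * r + a ^ 2 + r ^ 2) / (2 * a * (1 + r))) ^ 2
      = (a ^ 2 - r ^ 2) * ((r + 2) ^ 2 - a ^ 2) / (2 * a * (1 + r)) ^ 2 := by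
  field_simp
  ring

end GAtX₀

open GAtX₀ in
theorem stmt_13 (a r : ℝ) (hr : 0 < r) (hra : r < a) (ha : a < 1)
    (G : ℝ → ℝ)
    (hG : ∀ x, G x = x + Real.sqrt ((4 - a ^ 2 + 2 * a * r * x - r ^ 2) /
        (a ^ 2 - 2 * a * r * x + r ^ 2)) * Real.sqrt (1 - x ^ 2))
    (x₀ : ℝ) (hx₀ : x₀ = (2 * r + a ^ 2 + r ^ 2) / (2 * a * (1 + r))) :
    G x₀ = (r + 2) / a := by
  have ha₀ : 0 < a := hr.trans hra
  have hr₁ : 0 < 1 + r := by linarith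
  have hD : 0 < a ^ 2 - r ^ 2 := by nlinarith
  have hN : 0 ≤ (r + 2) ^ 2 - a ^ 2 := by nlinarith
  rw [hG, hx₀, four_sub_sq_add_two_mul_sub_sq ha₀.ne' hr₁.ne',
    sq_sub_two_mul_add_sq ha₀.ne' hr₁.ne', div_div_div_cancel_right₀ hr₁.ne',
    one_sub_sq ha₀.ne' hr₁.ne', Real.sqrt_div_mul_sqrt_mul_div_sq hN hD (by positivity)]
  field_simp
  ring
end

section
/- Let a, r be real numbers with 0 < r < a < 1, define G(x) = x + √((4 − a² + 2arx − r²)/(a² − 2arx + r²))·√(1 − x²), and set x₀ = (2r + a² + r²)/(2a(1 + r)). Then G is differentiable at x₀ with G′(x₀) = 0, and G attains its maximum over the interval [r/a, 1] at x₀, i.e. G(x) ≤ G(x₀) for all x ∈ [r/a, 1]. -/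
/-!
Write `N x = 4 - a² + 2arx - r²` and `D x = a² - 2arx + r²`. The polynomial identity
`(2 + r - a x)² D x - a² N x (1 - x²) = (2a(1 + r)x - (2r + a² + r²))²`
gives `(N x / D x)(1 - x²) ≤ ((2 + r)/a - x)²` on `[-1, 1]`, with equality at `x₀`, the root of the
right-hand side. Hence `G ≤ (2 + r)/a` on `[-1, 1]` and `G x₀ = (2 + r)/a`. As `x₀` lies inside
`[r/a, 1]` and `G` is differentiable there, Fermat's theorem gives `G'(x₀) = 0`.
-/

open Real Set

section

variable {a r x : ℝ}

lemma sq_mul_sub_sq_mul_mul_eq_sq (a r x : ℝ) :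
    (2 + r - a * x) ^ 2 * (a ^ 2 - 2 * a * r * x + r ^ 2)
      - a ^ 2 * ((4 - a ^ 2 + 2 * a * r * x - r ^ 2) * (1 - x ^ 2))
      = (2 * a * (1 + r) * x - (2 * r + a ^ 2 + r ^ 2)) ^ 2 := by
  ring

lemma sq_sub_two_mul_mul_add_sq_pos (hr : 0 ≤ r) (hra : r < a) (hx : x ∈ Icc (-1) 1) :
    0 < a ^ 2 - 2 * a * r * x + r ^ 2 := by
  obtain ⟨hx₁, hx₂⟩ := hx
  have h : a ^ 2 - 2 * a * r * x + r ^ 2 = (a - r * x) ^ 2 + r ^ 2 * (1 - x ^ 2) := by ring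
  have hrx : r * x ≤ r := by nlinarith
  rw [h]
  nlinarith [sq_pos_of_pos (show 0 < a - r * x by linarith)]

lemma four_sub_sq_add_two_mul_mul_sub_sq_pos (ha : 0 < a) (hr : 0 ≤ r) (ha2 : a < 2)
    (hx : r ≤ a * x) : 0 < 4 - a ^ 2 + 2 * a * r * x - r ^ 2 := by
  nlinarith [mul_le_mul_of_nonneg_left hx (by positivity : (0 : ℝ) ≤ 2 * r)]

lemma le_two_add_div_of_le_one (ha : 0 < a) (har : a ≤ 2 + r) (hx : x ≤ 1) :
    x ≤ (2 + r) / a := by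
  rw [le_div_iff₀ ha]
  nlinarith

lemma sqrt_ratio_mul_sqrt_eq (ha : a ≠ 0) (hx : x ∈ Icc (-1) 1)
    (hD : a ^ 2 - 2 * a * r * x + r ^ 2 ≠ 0) :
    √((4 - a ^ 2 + 2 * a * r * x - r ^ 2) / (a ^ 2 - 2 * a * r * x + r ^ 2)) * √(1 - x ^ 2)
      = √(((2 + r) / a - x) ^ 2 - (2 * a * (1 + r) * x - (2 * r + a ^ 2 + r ^ 2)) ^ 2
          / (a ^ 2 * (a ^ 2 - 2 * a * r * x + r ^ 2))) := by
  have h1x : 0 ≤ 1 - x ^ 2 := by nlinarith [hx.1, hx.2]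
  rw [← sqrt_mul' _ h1x, ← sq_mul_sub_sq_mul_mul_eq_sq]
  generalize a ^ 2 - 2 * a * r * x + r ^ 2 = D at hD ⊢
  congr 1
  field_simp
  ring

lemma sqrt_ratio_mul_sqrt_le (ha : 0 < a) (hr : 0 ≤ r) (hra : r < a) (har : a ≤ 2 + r)
    (hx : x ∈ Icc (-1) 1) :
    √((4 - a ^ 2 + 2 * a * r * x - r ^ 2) / (a ^ 2 - 2 * a * r * x + r ^ 2)) * √(1 - x ^ 2)
      ≤ (2 + r) / a - x := by
  have hD := sq_sub_two_mul_mul_add_sq_pos hr hra hx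
  have hc : 0 ≤ (2 + r) / a - x := sub_nonneg.2 (le_two_add_div_of_le_one ha har hx.2)
  rw [sqrt_ratio_mul_sqrt_eq ha.ne' hx hD.ne']
  calc _ ≤ √(((2 + r) / a - x) ^ 2) := sqrt_le_sqrt (sub_le_self _ (by positivity))
    _ = (2 + r) / a - x := sqrt_sq hc

lemma sqrt_ratio_mul_sqrt_eq_of_mul_eq (ha : 0 < a) (hr : 0 ≤ r) (hra : r < a) (har : a ≤ 2 + r)
    (hx : x ∈ Icc (-1) 1) (hx₀ : 2 * a * (1 + r) * x = 2 * r + a ^ 2 + r ^ 2) :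
    √((4 - a ^ 2 + 2 * a * r * x - r ^ 2) / (a ^ 2 - 2 * a * r * x + r ^ 2)) * √(1 - x ^ 2)
      = (2 + r) / a - x := by
  rw [sqrt_ratio_mul_sqrt_eq ha.ne' hx (sq_sub_two_mul_mul_add_sq_pos hr hra hx).ne', hx₀, sub_self,
    zero_pow two_ne_zero, zero_div, sub_zero]
  exact sqrt_sq (sub_nonneg.2 (le_two_add_div_of_le_one ha har hx.2))

lemma div_two_mul_one_add_mem_Ioo (ha : 0 < a) (hr : 0 ≤ r) (hra : r < a) (har : a < 2 + r) :
    (2 * r + a ^ 2 + r ^ 2) / (2 * a * (1 + r)) ∈ Ioo (r / a) 1 := by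
  have hd : 0 < 2 * a * (1 + r) := by positivity
  constructor
  · rw [div_lt_div_iff₀ ha hd]
    nlinarith [mul_pos ha (mul_pos (sub_pos.2 hra) (show 0 < a + r by linarith))]
  · rw [div_lt_one hd]
    nlinarith [mul_pos (sub_pos.2 hra) (show 0 < 2 + r - a by linarith)]

lemma differentiableAt_add_sqrt_ratio_mul_sqrt (ha : 0 < a) (hr : 0 ≤ r) (hra : r < a)
    (ha2 : a < 2) (hx : x ∈ Ioo (r / a) 1) :
    DifferentiableAt ℝ (fun y => y + √((4 - a ^ 2 + 2 * a * r * y - r ^ 2) /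
      (a ^ 2 - 2 * a * r * y + r ^ 2)) * √(1 - y ^ 2)) x := by
  obtain ⟨hx₁, hx₂⟩ := hx
  have hx0 : 0 ≤ x := (div_nonneg hr ha.le).trans hx₁.le
  have hN := four_sub_sq_add_two_mul_mul_sub_sq_pos ha hr ha2 ((div_lt_iff₀' ha).1 hx₁).le
  have hD := sq_sub_two_mul_mul_add_sq_pos hr hra ⟨by linarith, hx₂.le⟩
  have hQ : (4 - a ^ 2 + 2 * a * r * x - r ^ 2) / (a ^ 2 - 2 * a * r * x + r ^ 2) ≠ 0 :=
    (div_pos hN hD).ne'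
  have h1x : 1 - x ^ 2 ≠ 0 := by nlinarith
  have hD' := hD.ne'
  fun_prop (disch := assumption)

end

theorem stmt_14 (a r : ℝ) (hr : 0 < r) (hra : r < a) (ha : a < 1)
    (G : ℝ → ℝ)
    (hG : ∀ x, G x = x + Real.sqrt ((4 - a ^ 2 + 2 * a * r * x - r ^ 2) /
        (a ^ 2 - 2 * a * r * x + r ^ 2)) * Real.sqrt (1 - x ^ 2))
    (x₀ : ℝ) (hx₀ : x₀ = (2 * r + a ^ 2 + r ^ 2) / (2 * a * (1 + r))) :
    HasDerivAt G 0 x₀ ∧ ∀ x ∈ Set.Icc (r / a) 1, G x ≤ G x₀ := by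
  have ha₀ : 0 < a := hr.trans hra
  have har : a < 2 + r := by linarith
  obtain ⟨hl, hu⟩ : x₀ ∈ Ioo (r / a) 1 := hx₀ ▸ div_two_mul_one_add_mem_Ioo ha₀ hr.le hra har
  have hsub : Icc (r / a) 1 ⊆ Icc (-1) 1 :=
    Icc_subset_Icc (by linarith [div_pos hr ha₀]) le_rfl
  have hGx₀ : G x₀ = (2 + r) / a := by
    have hroot : 2 * a * (1 + r) * x₀ = 2 * r + a ^ 2 + r ^ 2 := by
      rw [hx₀]; field_simp
    rw [hG, sqrt_ratio_mul_sqrt_eq_of_mul_eq ha₀ hr.le hra har.le (hsub ⟨hl.le, hu.le⟩) hroot]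
    ring
  have hmax : ∀ x ∈ Icc (r / a) 1, G x ≤ G x₀ := fun x hx => by
    rw [hG, hGx₀]
    linarith [sqrt_ratio_mul_sqrt_le ha₀ hr.le hra har.le (hsub hx)]
  have hloc : IsLocalMax G x₀ := Filter.mem_of_superset (Icc_mem_nhds hl hu) hmax
  have hdiff : DifferentiableAt ℝ G x₀ := by
    rw [funext hG]
    exact differentiableAt_add_sqrt_ratio_mul_sqrt ha₀ hr.le hra (by linarith) ⟨hl, hu⟩
  exact ⟨hloc.deriv_eq_zero ▸ hdiff.hasDerivAt, hmax⟩
end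

section
/- Let a, λ, r be real numbers with 0 < r ≤ λ < a < 1. Then (1/2)·(a − r(r + 2)/a) ≥ (1/2)·(a − λ(λ + 2)/a), and consequently, for every x ∈ [−1, −r/a], (1/2)·(a + r·F(x)) ≥ (1/2)·(a − λ(λ + 2)/a), where F(x) = x − √((4 − a² − 2arx − r²)/(a² + 2arx + r²))·√(1 − x²). -/
theorem stmt_15 (a lam r : ℝ) (hr : 0 < r) (hrlam : r ≤ lam) (hlama : lam < a)
    (ha : a < 1)
    (F : ℝ → ℝ)
    (hF : ∀ x, F x = x - Real.sqrt ((4 - a ^ 2 - 2 * a * r * x - r ^ 2) /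
        (a ^ 2 + 2 * a * r * x + r ^ 2)) * Real.sqrt (1 - x ^ 2)) :
    (1 / 2) * (a - lam * (lam + 2) / a) ≤ (1 / 2) * (a - r * (r + 2) / a) ∧
    ∀ x ∈ Set.Icc (-1 : ℝ) (-(r / a)),
      (1 / 2) * (a - lam * (lam + 2) / a) ≤ (1 / 2) * (a + r * F x) := by
  have ha0 : 0 < a := lt_trans (lt_of_lt_of_le hr hrlam) hlama
  have part1 : (1 / 2) * (a - lam * (lam + 2) / a) ≤ (1 / 2) * (a - r * (r + 2) / a) := by
    have h1 : r * (r + 2) ≤ lam * (lam + 2) := by nlinarith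
    have h2 : r * (r + 2) / a ≤ lam * (lam + 2) / a := by gcongr
    linarith
  refine ⟨part1, ?_⟩
  intro x hx
  obtain ⟨hx1, hx2⟩ := hx
  have haxr : a * x ≤ -r := by
    have := mul_le_mul_of_nonneg_left hx2 ha0.le
    have h : a * -(r / a) = -r := by field_simp
    linarith [h ▸ this]
  have hx0 : x ≤ 0 := by nlinarith
  have h1x : 0 ≤ 1 - x ^ 2 := by nlinarith
  have hu : 0 < a ^ 2 + 2 * a * r * x + r ^ 2 := by
    nlinarith [mul_pos ha0 hr, sq_nonneg (a - r)]
  have h4u : 0 ≤ 4 - a ^ 2 - 2 * a * r * x - r ^ 2 := by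
    nlinarith [mul_le_mul_of_nonneg_left haxr hr.le]
  have hc : 0 ≤ x + (r + 2) / a := by
    have h1 : 1 ≤ (r + 2) / a := (le_div_iff₀ ha0).mpr (by linarith)
    linarith
  have key : Real.sqrt ((4 - a ^ 2 - 2 * a * r * x - r ^ 2) /
      (a ^ 2 + 2 * a * r * x + r ^ 2)) * Real.sqrt (1 - x ^ 2) ≤ x + (r + 2) / a := by
    rw [← Real.sqrt_mul (div_nonneg h4u hu.le)]
    rw [show x + (r + 2) / a = Real.sqrt ((x + (r + 2) / a) ^ 2) from (Real.sqrt_sq hc).symm]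
    apply Real.sqrt_le_sqrt
    rw [div_mul_eq_mul_div, div_le_iff₀ hu]
    have hpoly : (4 - a ^ 2 - 2 * a * r * x - r ^ 2) * (1 - x ^ 2) * a ^ 2 ≤
        (a * x + r + 2) ^ 2 * (a ^ 2 + 2 * a * r * x + r ^ 2) := by
      nlinarith [sq_nonneg ((a * x + r) * (a * x + r + 2) + a ^ 2 * (1 - x ^ 2))]
    have hc2 : (x + (r + 2) / a) ^ 2 = (a * x + r + 2) ^ 2 / a ^ 2 := by
      field_simp; ring
    rw [hc2, div_mul_eq_mul_div, le_div_iff₀ (by positivity : (0:ℝ) < a ^ 2)]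
    linarith
  have hF' : -((r + 2) / a) ≤ F x := by rw [hF]; linarith
  have hrF : -(r * ((r + 2) / a)) ≤ r * F x := by
    have := mul_le_mul_of_nonneg_left hF' hr.le
    linarith
  have heq : r * ((r + 2) / a) = r * (r + 2) / a := by ring
  linarith [part1]
end
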